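/- arXiv:1606.01610 — 4 statements merged into one kernel-verified Lean document; each statement's English description precedes it below -/
import Mathlib

section
/- Weak duality: for any u ∈ U(X,S) and any positive measure γ on X × X whose marginal difference γ₁ - γ₂ dominates μ in the order ⪰_{X,S}, one has ∫_X u dμ ≤ ∫_{X×X} ℓ_S(x,y) dγ(x,y). -/
/-!
A subgradient `s ∈ S` of `u` at `x` gives `u x - u y ≤ s · (x - y) ≤ ℓ_S(x, y)` for
`x, y ∈ X`. Integrating this against `γ` bounds `∫ u d(γ₁ - γ₂)` by `∫ ℓ_S dγ`, and the
dominance hypothesis applied to `u` itself bounds `∫ u dμ` by `∫ u d(γ₁ - γ₂)`. Boundedness of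
`S` makes `u` Lipschitz on `X` and `ℓ_S` Lipschitz, which provides the integrability that the
Bochner integrals need.
-/

open MeasureTheory

/-- `u` is a feasible mechanism: convex on `X` with a subgradient in `S` at
every point of `X`. -/
def MemU {n : ℕ} (X S : Set (Fin n → ℝ)) (u : (Fin n → ℝ) → ℝ) : Prop :=
  ConvexOn ℝ X u ∧ ∀ y ∈ X, ∃ s ∈ S, ∀ x ∈ X, u y + ∑ i, s i * (x i - y i) ≤ u x

/-- `ℓ_S(x,y) = sup_{s ∈ S} s · (x - y)`. -/
noncomputable def ellS {n : ℕ} (S : Set (Fin n → ℝ)) (x y : Fin n → ℝ) : ℝ :=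
  sSup {r : ℝ | ∃ s ∈ S, r = ∑ i, s i * (x i - y i)}

section SupportFunction

variable {n : ℕ} {S : Set (Fin n → ℝ)} {B : ℝ}

noncomputable def supportFun (S : Set (Fin n → ℝ)) (v : Fin n → ℝ) : ℝ :=
  sSup {r : ℝ | ∃ s ∈ S, r = ∑ i, s i * v i}

lemma ellS_eq_supportFun (x y : Fin n → ℝ) : ellS S x y = supportFun S (x - y) := rfl

lemma sum_mul_le_mul_norm {s : Fin n → ℝ} (hs : ‖s‖ ≤ B) (v : Fin n → ℝ) :
    ∑ i, s i * v i ≤ n * B * ‖v‖ := by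
  have hterm : ∀ i ∈ Finset.univ, s i * v i ≤ B * ‖v‖ := fun i _ =>
    calc s i * v i ≤ |s i| * |v i| := (le_abs_self _).trans (abs_mul _ _).le
      _ ≤ B * ‖v‖ := mul_le_mul ((norm_le_pi_norm s i).trans hs) (norm_le_pi_norm v i)
          (abs_nonneg _) ((norm_nonneg _).trans hs)
  simpa [mul_assoc] using Finset.sum_le_card_nsmul _ _ _ hterm

lemma le_supportFun (hS : ∀ s ∈ S, ‖s‖ ≤ B) {s : Fin n → ℝ} (hs : s ∈ S) (v : Fin n → ℝ) :
    ∑ i, s i * v i ≤ supportFun S v :=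
  le_csSup ⟨n * B * ‖v‖, by rintro _ ⟨t, ht, rfl⟩; exact sum_mul_le_mul_norm (hS t ht) v⟩
    ⟨s, hs, rfl⟩

lemma supportFun_le_mul_norm (hS : ∀ s ∈ S, ‖s‖ ≤ B) (hB : 0 ≤ B) (v : Fin n → ℝ) :
    supportFun S v ≤ n * B * ‖v‖ :=
  Real.sSup_le (by rintro _ ⟨s, hs, rfl⟩; exact sum_mul_le_mul_norm (hS s hs) v) (by positivity)

lemma supportFun_add_le (hS : ∀ s ∈ S, ‖s‖ ≤ B) (v w : Fin n → ℝ) :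
    supportFun S (v + w) ≤ supportFun S v + supportFun S w := by
  rcases S.eq_empty_or_nonempty with rfl | ⟨s₀, hs₀⟩
  · simp [supportFun]
  refine csSup_le ⟨_, s₀, hs₀, rfl⟩ ?_
  rintro _ ⟨s, hs, rfl⟩
  simp only [Pi.add_apply, mul_add, Finset.sum_add_distrib]
  exact add_le_add (le_supportFun hS hs v) (le_supportFun hS hs w)

lemma lipschitzWith_supportFun (hS : ∀ s ∈ S, ‖s‖ ≤ B) (hB : 0 ≤ B) :
    LipschitzWith (Real.toNNReal (n * B)) (supportFun S) := by
  refine LipschitzWith.of_le_add_mul' _ fun v w => ?_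
  calc supportFun S v = supportFun S (w + (v - w)) := by rw [add_sub_cancel]
    _ ≤ supportFun S w + supportFun S (v - w) := supportFun_add_le hS w (v - w)
    _ ≤ supportFun S w + n * B * dist v w := by
      rw [dist_eq_norm]; gcongr; exact supportFun_le_mul_norm hS hB _

end SupportFunction

lemma continuous_ellS {n : ℕ} {S : Set (Fin n → ℝ)} (hS : Bornology.IsBounded S) :
    Continuous fun p : (Fin n → ℝ) × (Fin n → ℝ) => ellS S p.1 p.2 := by
  obtain ⟨B, hB0, hB⟩ := hS.exists_pos_norm_le
  simp only [ellS_eq_supportFun]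
  exact (lipschitzWith_supportFun hB hB0.le).continuous.comp (continuous_fst.sub continuous_snd)

namespace MemU

variable {n : ℕ} {X S : Set (Fin n → ℝ)} {u : (Fin n → ℝ) → ℝ}

lemma sub_le_ellS (hu : MemU X S u) (hS : Bornology.IsBounded S) {x y : Fin n → ℝ}
    (hx : x ∈ X) (hy : y ∈ X) : u x - u y ≤ ellS S x y := by
  obtain ⟨B, hB⟩ := hS.exists_norm_le
  obtain ⟨s, hs, hsub⟩ := hu.2 x hx
  have hxy : ∑ i, s i * (y i - x i) = -∑ i, s i * (x i - y i) := by
    rw [← Finset.sum_neg_distrib]; congr 1; ext i; ring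
  have hsup : ∑ i, s i * (x i - y i) ≤ ellS S x y := le_supportFun hB hs (x - y)
  linarith [hsub y hy]

lemma continuousOn (hu : MemU X S u) (hS : Bornology.IsBounded S) : ContinuousOn u X := by
  obtain ⟨B, hB0, hB⟩ := hS.exists_pos_norm_le
  refine (LipschitzOnWith.of_le_add_mul' (n * B) fun x hx y hy => ?_).continuousOn
  have hxy : u x - u y ≤ n * B * dist x y := (hu.sub_le_ellS hS hx hy).trans <| by
    rw [dist_eq_norm, ellS_eq_supportFun]; exact supportFun_le_mul_norm hB hB0.le (x - y)
  linarith

end MemU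

section Marginals

variable {α : Type*} [TopologicalSpace α] [T2Space α] [MeasurableSpace α] [OpensMeasurableSpace α]
  {K : Set α} {f : α → ℝ}

lemma integrable_of_continuousOn_of_ae_mem {ν : Measure α} [IsFiniteMeasure ν]
    (hK : IsCompact K) (hν : ∀ᵐ x ∂ν, x ∈ K) (hf : ContinuousOn f K) : Integrable f ν := by
  rw [← Measure.restrict_eq_self_of_ae_mem hν]
  exact hf.integrableOn_compact hK

lemma integral_map_fst_sub_integral_map_snd {γ : Measure (α × α)} [IsFiniteMeasure γ]
    (hK : IsCompact K) (hγ : ∀ᵐ p ∂γ, p ∈ K ×ˢ K) (hf : ContinuousOn f K) :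
    ∫ x, f x ∂γ.map Prod.fst - ∫ x, f x ∂γ.map Prod.snd = ∫ p, (f p.1 - f p.2) ∂γ := by
  have hKm : MeasurableSet K := hK.isClosed.measurableSet
  have h₁ : Integrable f (γ.map Prod.fst) := integrable_of_continuousOn_of_ae_mem hK
    ((ae_map_iff measurable_fst.aemeasurable hKm).2 (hγ.mono fun _ hp => hp.1)) hf
  have h₂ : Integrable f (γ.map Prod.snd) := integrable_of_continuousOn_of_ae_mem hK
    ((ae_map_iff measurable_snd.aemeasurable hKm).2 (hγ.mono fun _ hp => hp.2)) hf
  rw [integral_map measurable_fst.aemeasurable h₁.aestronglyMeasurable,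
    integral_map measurable_snd.aemeasurable h₂.aestronglyMeasurable]
  exact (integral_sub (h₁.comp_measurable measurable_fst) (h₂.comp_measurable measurable_snd)).symm

end Marginals

theorem weak_duality_general {n : ℕ} (X S : Set (Fin n → ℝ))
    (hX : IsCompact X)
    (hSb : Bornology.IsBounded S)
    (μp μm : Measure (Fin n → ℝ))
    (γ : Measure ((Fin n → ℝ) × (Fin n → ℝ))) [IsFiniteMeasure γ]
    (hγX : γ (X ×ˢ X)ᶜ = 0)
    (hdom : ∀ v : (Fin n → ℝ) → ℝ, MemU X S v →
      (∫ x, v x ∂(γ.map Prod.fst)) - (∫ x, v x ∂(γ.map Prod.snd)) ≥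
        (∫ x, v x ∂μp) - (∫ x, v x ∂μm))
    (u : (Fin n → ℝ) → ℝ) (hu : MemU X S u) :
    (∫ x, u x ∂μp) - (∫ x, u x ∂μm) ≤ ∫ p, ellS S p.1 p.2 ∂γ := by
  have hγ : ∀ᵐ p ∂γ, p ∈ X ×ˢ X := ae_iff.2 hγX
  have hu_cont : ContinuousOn u X := hu.continuousOn hSb
  have hdiff_cont : ContinuousOn (fun p : (Fin n → ℝ) × (Fin n → ℝ) => u p.1 - u p.2) (X ×ˢ X) :=
    (hu_cont.comp continuousOn_fst fun _ hp => hp.1).sub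
      (hu_cont.comp continuousOn_snd fun _ hp => hp.2)
  calc (∫ x, u x ∂μp) - (∫ x, u x ∂μm)
      ≤ (∫ x, u x ∂(γ.map Prod.fst)) - (∫ x, u x ∂(γ.map Prod.snd)) := hdom u hu
    _ = ∫ p, (u p.1 - u p.2) ∂γ := integral_map_fst_sub_integral_map_snd hX hγ hu_cont
    _ ≤ ∫ p, ellS S p.1 p.2 ∂γ :=
      integral_mono_ae (integrable_of_continuousOn_of_ae_mem (hX.prod hX) hγ hdiff_cont)
        (integrable_of_continuousOn_of_ae_mem (hX.prod hX) hγ (continuous_ellS hSb).continuousOn)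
        (hγ.mono fun _ hp => hu.sub_le_ellS hSb hp.1 hp.2)

/-- weak duality: for any feasible mechanism `u ∈ U(X,S)` and any
positive measure `γ` on `X × X` whose marginal difference `γ₁ - γ₂` dominates the
signed measure `μ = μ₊ - μ₋` in the order `⪰_{X,S}`, one has
`∫_X u dμ ≤ ∫_{X×X} ℓ_S(x,y) dγ(x,y)`. -/
theorem weak_duality {n : ℕ} (X S : Set (Fin n → ℝ))
    (hX : IsCompact X) (hXc : Convex ℝ X)
    (hSne : S.Nonempty) (hScl : IsClosed S) (hSb : Bornology.IsBounded S)
    (μp μm : Measure (Fin n → ℝ)) [IsFiniteMeasure μp] [IsFiniteMeasure μm]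
    (hμp : μp Xᶜ = 0) (hμm : μm Xᶜ = 0)
    (γ : Measure ((Fin n → ℝ) × (Fin n → ℝ))) [IsFiniteMeasure γ]
    (hγX : γ (X ×ˢ X)ᶜ = 0)
    (hdom : ∀ v : (Fin n → ℝ) → ℝ, MemU X S v →
      (∫ x, v x ∂(γ.map Prod.fst)) - (∫ x, v x ∂(γ.map Prod.snd)) ≥
        (∫ x, v x ∂μp) - (∫ x, v x ∂μm))
    (u : (Fin n → ℝ) → ℝ) (hu : MemU X S u) :
    (∫ x, u x ∂μp) - (∫ x, u x ∂μm) ≤ ∫ p, ellS S p.1 p.2 ∂γ :=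
  weak_duality_general X S hX hSb μp μm γ hγX hdom u hu
end

section
/- Strassen's theorem in one dimension: if ν₊ and ν₋ are finite positive measures on an interval [a,b] ⊆ ℝ with ν₊([a,b]) = ν₋([a,b]) and ν₊ stochastically dominates ν₋ (i.e., ν₊([t,b]) ≥ ν₋([t,b]) for all t), then there exists a positive measure γ on [a,b] × [a,b] with first marginal ν₊ and second marginal ν₋ such that x ≥ y γ-almost surely. -/
/-!
Quantile coupling. Stochastic dominance says exactly that the distribution function of `ν₊` lies
below that of `ν₋`, so the quantile functions satisfy `Q₋ ≤ Q₊`. Each quantile function pushes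
Lebesgue measure on `(0, m]`, `m` the common total mass, forward to its measure, hence
`u ↦ (Q₊ u, Q₋ u)` pushes it to a coupling supported in `{y ≤ x}`.
-/

open MeasureTheory Set Filter Topology

section RightContinuity

variable {α : Type*} [LinearOrder α] [TopologicalSpace α] [OrderTopology α]
  [FirstCountableTopology α] [DenselyOrdered α] [NoMaxOrder α]
  [MeasurableSpace α] [OpensMeasurableSpace α]

theorem tendsto_measure_Iic_nhdsGT (ν : Measure α) [IsFiniteMeasure ν] (x : α) :
    Tendsto (fun r => ν (Iic r)) (𝓝[>] x) (𝓝 (ν (Iic x))) := by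
  obtain ⟨r, hr⟩ := exists_gt x
  have hlim := tendsto_measure_biInter_gt (μ := ν) (s := Iic) (a := x)
    (fun _ _ => measurableSet_Iic.nullMeasurableSet) (fun _ _ _ hij => Iic_subset_Iic.2 hij)
    ⟨r, hr, measure_ne_top ν _⟩
  have hinter : ⋂ r > x, Iic r = Iic x := by
    ext z
    simpa only [mem_iInter₂, mem_Iic] using
      ⟨le_of_forall_gt_imp_ge_of_dense, fun hz _ h => hz.trans h.le⟩
  rwa [hinter] at hlim

end RightContinuity

section SupportedOnIcc

variable {a b : ℝ} {ν : Measure ℝ}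

theorem measure_Iic_eq_zero_of_lt_of_compl_Icc (hν : ν (Icc a b)ᶜ = 0) {x : ℝ} (hx : x < a) :
    ν (Iic x) = 0 :=
  measure_mono_null (fun _ (hz : _ ≤ x) hmem => (hx.trans_le (hmem : _ ∈ Icc a b).1).not_ge hz) hν

theorem measure_Iic_eq_univ_of_compl_Icc (hν : ν (Icc a b)ᶜ = 0) : ν (Iic b) = ν univ :=
  measure_congr (ae_eq_univ.2 (measure_mono_null (compl_subset_compl.2 Icc_subset_Iic_self) hν))

theorem measure_Ici_eq_Icc_of_compl_Icc (hν : ν (Icc a b)ᶜ = 0) (t : ℝ) :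
    ν (Ici t) = ν (Icc t b) := by
  rw [← Ici_inter_Iic,
    measure_inter_conull (measure_mono_null (compl_subset_compl.2 Icc_subset_Iic_self) hν)]

end SupportedOnIcc

theorem measure_Iic_le_of_stochasticDominance {a b : ℝ} {νp νm : Measure ℝ}
    [IsFiniteMeasure νp] [IsFiniteMeasure νm]
    (hp : νp (Icc a b)ᶜ = 0) (hm : νm (Icc a b)ᶜ = 0) (hmass : νp univ = νm univ)
    (hdom : ∀ t, νm (Icc t b) ≤ νp (Icc t b)) (x : ℝ) :
    νp (Iic x) ≤ νm (Iic x) := by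
  have hIio (r : ℝ) : νp (Iio r) ≤ νm (Iio r) := by
    rw [← compl_Ici, measure_compl measurableSet_Ici (measure_ne_top _ _),
      measure_compl measurableSet_Ici (measure_ne_top _ _),
      measure_Ici_eq_Icc_of_compl_Icc hp, measure_Ici_eq_Icc_of_compl_Icc hm, hmass]
    exact tsub_le_tsub_left (hdom r) _
  refine ge_of_tendsto (tendsto_measure_Iic_nhdsGT νm x)
    (eventually_nhdsWithin_of_forall fun r (hr : x < r) => ?_)
  calc νp (Iic x) ≤ νp (Iio r) := measure_mono (Iic_subset_Iio.2 hr)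
    _ ≤ νm (Iio r) := hIio r
    _ ≤ νm (Iic r) := measure_mono Iio_subset_Iic_self

/-- The quantile function of `ν`, clamped to `[a, b]` so that it is monotone and `[a, b]`-valued
on all of `ℝ`, not only on `(0, ν univ]`. -/
noncomputable def quantileIcc (a b : ℝ) (ν : Measure ℝ) (u : ℝ) : ℝ :=
  sInf (insert b {x | a ≤ x ∧ ENNReal.ofReal u ≤ ν (Iic x)})

section Quantile

variable {a b : ℝ}

theorem bddBelow_quantileIcc_set (hab : a ≤ b) (ν : Measure ℝ) (u : ℝ) :
    BddBelow (insert b {x | a ≤ x ∧ ENNReal.ofReal u ≤ ν (Iic x)}) :=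
  ⟨a, forall_mem_insert.2 ⟨hab, fun _ hx => hx.1⟩⟩

theorem quantileIcc_mem_Icc (hab : a ≤ b) (ν : Measure ℝ) (u : ℝ) : quantileIcc a b ν u ∈ Icc a b :=
  ⟨le_csInf (insert_nonempty _ _) (forall_mem_insert.2 ⟨hab, fun _ hx => hx.1⟩),
    csInf_le (bddBelow_quantileIcc_set hab ν u) (mem_insert _ _)⟩

theorem quantileIcc_le_quantileIcc (hab : a ≤ b) {ν ν' : Measure ℝ}
    (h : ∀ x, ν (Iic x) ≤ ν' (Iic x)) {u v : ℝ} (huv : u ≤ v) :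
    quantileIcc a b ν' u ≤ quantileIcc a b ν v :=
  csInf_le_csInf (bddBelow_quantileIcc_set hab ν' u) (insert_nonempty _ _)
    (insert_subset_insert fun _ hx =>
      ⟨hx.1, (ENNReal.ofReal_le_ofReal huv).trans (hx.2.trans (h _))⟩)

theorem monotone_quantileIcc (hab : a ≤ b) (ν : Measure ℝ) : Monotone (quantileIcc a b ν) :=
  fun _ _ => quantileIcc_le_quantileIcc hab fun _ => le_rfl

theorem quantileIcc_le_iff (hab : a ≤ b) {ν : Measure ℝ} [IsFiniteMeasure ν]
    (hν : ν (Icc a b)ᶜ = 0) {u : ℝ} (hu : u ∈ Ioc 0 (ν univ).toReal) (x : ℝ) :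
    quantileIcc a b ν u ≤ x ↔ ENNReal.ofReal u ≤ ν (Iic x) := by
  constructor
  · intro hx
    refine ge_of_tendsto (tendsto_measure_Iic_nhdsGT ν x)
      (eventually_nhdsWithin_of_forall fun r (hr : x < r) => ?_)
    obtain ⟨y, hy, hyr⟩ := exists_lt_of_csInf_lt (insert_nonempty _ _) (hx.trans_lt hr)
    have hyu : ENNReal.ofReal u ≤ ν (Iic y) := by
      rcases hy with rfl | hy
      · rw [measure_Iic_eq_univ_of_compl_Icc hν]
        exact ENNReal.ofReal_le_of_le_toReal hu.2
      · exact hy.2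
    exact hyu.trans (measure_mono (Iic_subset_Iic.2 hyr.le))
  · intro hx
    have hax : a ≤ x := by
      by_contra! hxa
      rw [measure_Iic_eq_zero_of_lt_of_compl_Icc hν hxa, nonpos_iff_eq_zero,
        ENNReal.ofReal_eq_zero] at hx
      exact hu.1.not_ge hx
    exact csInf_le (bddBelow_quantileIcc_set hab ν u) (Or.inr ⟨hax, hx⟩)

theorem map_quantileIcc (hab : a ≤ b) {ν : Measure ℝ} [IsFiniteMeasure ν]
    (hν : ν (Icc a b)ᶜ = 0) :
    (volume.restrict (Ioc 0 (ν univ).toReal)).map (quantileIcc a b ν) = ν := by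
  have hQ := (monotone_quantileIcc hab ν).measurable
  refine Measure.ext_of_Iic _ _ fun x => ?_
  have hFx : (ν (Iic x)).toReal ≤ (ν univ).toReal :=
    ENNReal.toReal_mono (measure_ne_top ν _) (measure_mono (subset_univ _))
  have hpre : quantileIcc a b ν ⁻¹' Iic x ∩ Ioc 0 (ν univ).toReal = Ioc 0 (ν (Iic x)).toReal := by
    ext u
    refine ⟨fun ⟨hux, hu⟩ => ⟨hu.1, ?_⟩, fun hu => ⟨?_, hu.1, hu.2.trans hFx⟩⟩
    · exact (ENNReal.ofReal_le_iff_le_toReal (measure_ne_top ν _)).1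
        ((quantileIcc_le_iff hab hν hu x).1 hux)
    · exact (quantileIcc_le_iff hab hν ⟨hu.1, hu.2.trans hFx⟩ x).2
        (ENNReal.ofReal_le_of_le_toReal hu.2)
  rw [Measure.map_apply hQ measurableSet_Iic, Measure.restrict_apply (hQ measurableSet_Iic), hpre,
    Real.volume_Ioc, sub_zero, ENNReal.ofReal_toReal (measure_ne_top ν _)]

end Quantile

/-- Strassen's theorem in one dimension: if `ν₊` and `ν₋` are
finite positive measures on `[a,b] ⊆ ℝ` with equal total mass and `ν₊`
stochastically dominates `ν₋` (`ν₊ [t,b] ≥ ν₋ [t,b]` for all `t`), then there is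
a positive measure `γ` on `[a,b] × [a,b]` with first marginal `ν₊` and second
marginal `ν₋` such that `x ≥ y` `γ`-almost surely. -/
theorem strassen_one_dim (a b : ℝ) (hab : a ≤ b)
    (νp νm : Measure ℝ) [IsFiniteMeasure νp] [IsFiniteMeasure νm]
    (hp : νp (Set.Icc a b)ᶜ = 0) (hm : νm (Set.Icc a b)ᶜ = 0)
    (htot : νp (Set.Icc a b) = νm (Set.Icc a b))
    (hdom : ∀ t : ℝ, νm (Set.Icc t b) ≤ νp (Set.Icc t b)) :
    ∃ γ : Measure (ℝ × ℝ),
      γ ((Set.Icc a b ×ˢ Set.Icc a b)ᶜ) = 0 ∧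
      γ.map Prod.fst = νp ∧ γ.map Prod.snd = νm ∧
      (∀ᵐ p ∂γ, p.2 ≤ p.1) := by
  have hmass : νp univ = νm univ := by
    rw [← measure_congr (ae_eq_univ.2 hp), ← measure_congr (ae_eq_univ.2 hm), htot]
  have hQp := (monotone_quantileIcc hab νp).measurable
  have hQm := (monotone_quantileIcc hab νm).measurable
  have hQ := hQp.prodMk hQm
  refine ⟨(volume.restrict (Ioc 0 (νp univ).toReal)).map
    fun u => (quantileIcc a b νp u, quantileIcc a b νm u), ?_, ?_, ?_, ?_⟩
  · refine mem_ae_iff.1 ((ae_map_iff hQ.aemeasurable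
      (measurableSet_Icc.prod measurableSet_Icc)).2 (ae_of_all _ fun u => ?_))
    exact ⟨quantileIcc_mem_Icc hab νp u, quantileIcc_mem_Icc hab νm u⟩
  · exact (Measure.fst_map_prodMk hQm).trans (map_quantileIcc hab hp)
  · rw [hmass]
    exact (Measure.snd_map_prodMk hQp).trans (map_quantileIcc hab hm)
  · refine (ae_map_iff hQ.aemeasurable (measurableSet_le measurable_snd measurable_fst)).2
      (ae_of_all _ fun u => ?_)
    exact quantileIcc_le_quantileIcc hab
      (measure_Iic_le_of_stochasticDominance hp hm hmass hdom) le_rfl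
end

section
/- For the grand-bundling mechanism at price p = √(8/3) in the non-additive two-item setting, the zero cell {(x₁,x₂) ∈ [0,1]² : 2(x₁+x₂) ≤ √(8/3)} has μ-measure zero: the interior integral of −3 over the triangle {x₁,x₂ ≥ 0, x₁+x₂ ≤ √(8/3)/2} equals −1, cancelling the point mass +1 at the origin. -/
open MeasureTheory Classical

/-- The transformed measure `μ` for the two-item i.i.d. uniform `[0,1]` setting,
as a set function: density `−3` on the interior of the unit square, a point mass
`+1` at the origin, and uniform density `+1` on each of the boundary segments
`{1}×[0,1]` and `[0,1]×{1}`. -/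
noncomputable def muUnif (A : Set (ℝ × ℝ)) : ℝ :=
  (∫ x in A ∩ (Set.Ioo (0:ℝ) 1 ×ˢ Set.Ioo (0:ℝ) 1), (-3 : ℝ)) +
  (if ((0 : ℝ), (0 : ℝ)) ∈ A then (1 : ℝ) else 0) +
  (volume {t : ℝ | t ∈ Set.Icc (0:ℝ) 1 ∧ ((1 : ℝ), t) ∈ A}).toReal +
  (volume {t : ℝ | t ∈ Set.Icc (0:ℝ) 1 ∧ (t, (1 : ℝ)) ∈ A}).toReal

/-- The zero cell of the grand-bundling mechanism at price `√(8/3)` in the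
non-additive two-item setting. -/
noncomputable def zeroCellBundle : Set (ℝ × ℝ) :=
  {p : ℝ × ℝ | p.1 ∈ Set.Icc (0:ℝ) 1 ∧ p.2 ∈ Set.Icc (0:ℝ) 1 ∧
    2 * (p.1 + p.2) ≤ Real.sqrt (8/3)}

/-!
Inside the open unit square the zero cell is the corner triangle `x₁, x₂ > 0, x₁ + x₂ ≤ s` with
`s = √(8/3)/2 < 1`, of area `s²/2 = 1/3`; so the density `−3` contributes `−1`. The cell contains
the origin, contributing `+1`, and misses both segments `x₁ = 1`, `x₂ = 1`, since `2 > √(8/3)`.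
-/

open Set

def cornerTriangle (s : ℝ) : Set (ℝ × ℝ) :=
  {p | 0 < p.1 ∧ 0 < p.2 ∧ p.1 + p.2 ≤ s}

lemma volume_setOf_fst_add_snd_eq (s : ℝ) : volume {p : ℝ × ℝ | p.1 + p.2 = s} = 0 := by
  have hmeas : MeasurableSet {p : ℝ × ℝ | p.1 + p.2 = s} :=
    measurableSet_eq_fun (by fun_prop) measurable_const
  have hslice (x : ℝ) : Prod.mk x ⁻¹' {p : ℝ × ℝ | p.1 + p.2 = s} = {s - x} := by
    ext y
    simp only [mem_preimage, mem_ofPred_eq, mem_singleton_iff]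
    constructor <;> intro h <;> linarith
  simp [Measure.volume_eq_prod, Measure.prod_apply hmeas, hslice]

lemma regionBetween_subset_cornerTriangle (s : ℝ) :
    regionBetween 0 (fun x => s - x) (Ioo 0 s) ⊆ cornerTriangle s := by
  rintro p ⟨⟨hp1, -⟩, hp2, hp12⟩
  exact ⟨hp1, hp2, by simp only at hp12; linarith⟩

lemma cornerTriangle_diff_regionBetween_subset (s : ℝ) :
    cornerTriangle s \ regionBetween 0 (fun x => s - x) (Ioo 0 s) ⊆
      {p : ℝ × ℝ | p.1 + p.2 = s} := by
  rintro p ⟨⟨hp1, hp2, hp12⟩, hp⟩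
  by_contra hne
  have hlt : p.1 + p.2 < s := lt_of_le_of_ne hp12 hne
  exact hp ⟨⟨hp1, by linarith⟩, hp2, by simp only; linarith⟩

lemma cornerTriangle_ae_eq_regionBetween (s : ℝ) :
    cornerTriangle s =ᵐ[volume] regionBetween 0 (fun x => s - x) (Ioo 0 s) :=
  ae_eq_set.mpr
    ⟨measure_mono_null (cornerTriangle_diff_regionBetween_subset s)
        (volume_setOf_fst_add_snd_eq s),
      by rw [sdiff_eq_empty.mpr (regionBetween_subset_cornerTriangle s), measure_empty]⟩

lemma integral_Ioo_sub_id {s : ℝ} (hs : 0 ≤ s) : ∫ x in Ioo 0 s, (s - x) = s ^ 2 / 2 := by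
  rw [← integral_Ioc_eq_integral_Ioo, ← intervalIntegral.integral_of_le hs,
    intervalIntegral.integral_sub intervalIntegrable_const intervalIntegral.intervalIntegrable_id,
    intervalIntegral.integral_const, integral_id, smul_eq_mul]
  ring

lemma volume_cornerTriangle {s : ℝ} (hs : 0 ≤ s) :
    volume (cornerTriangle s) = ENNReal.ofReal (s ^ 2 / 2) := by
  have hgraph_int : IntegrableOn (fun x => s - x) (Ioo 0 s) :=
    (continuous_const.sub continuous_id).integrableOn_Icc.mono_set Ioo_subset_Icc_self
  rw [measure_congr (cornerTriangle_ae_eq_regionBetween s), Measure.volume_eq_prod,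
    volume_regionBetween_eq_integral (f := 0) integrableOn_zero hgraph_int
      measurableSet_Ioo (fun x hx => by simp only [Pi.zero_apply]; linarith [hx.2])]
  simp only [Pi.sub_apply, Pi.zero_apply, sub_zero]
  rw [integral_Ioo_sub_id hs]

lemma sqrt_eight_thirds_div_two_sq : (Real.sqrt (8 / 3) / 2) ^ 2 = 2 / 3 := by
  rw [div_pow, Real.sq_sqrt (by norm_num)]
  norm_num

lemma sqrt_eight_thirds_lt_two : Real.sqrt (8 / 3) < 2 := by
  rw [Real.sqrt_lt' two_pos]
  norm_num

lemma zeroCellBundle_inter_Ioo_prod_Ioo :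
    zeroCellBundle ∩ (Ioo (0:ℝ) 1 ×ˢ Ioo (0:ℝ) 1) = cornerTriangle (Real.sqrt (8 / 3) / 2) := by
  have hsqrt := sqrt_eight_thirds_lt_two
  ext p
  simp only [zeroCellBundle, cornerTriangle, mem_inter_iff, mem_ofPred_eq, mem_prod, mem_Ioo,
    mem_Icc]
  constructor
  · rintro ⟨⟨-, -, h⟩, ⟨h1, -⟩, ⟨h2, -⟩⟩
    exact ⟨h1, h2, by linarith⟩
  · rintro ⟨h1, h2, h⟩
    exact ⟨⟨⟨h1.le, by linarith⟩, ⟨h2.le, by linarith⟩, by linarith⟩,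
      ⟨h1, by linarith⟩, ⟨h2, by linarith⟩⟩

lemma zero_mem_zeroCellBundle : ((0:ℝ), (0:ℝ)) ∈ zeroCellBundle :=
  ⟨by simp, by simp, by simpa using Real.sqrt_nonneg (8 / 3)⟩

lemma one_prod_notMem_zeroCellBundle {t : ℝ} (ht : 0 ≤ t) : ((1:ℝ), t) ∉ zeroCellBundle :=
  fun ⟨_, _, h⟩ => by linarith [sqrt_eight_thirds_lt_two]

lemma prod_one_notMem_zeroCellBundle {t : ℝ} (ht : 0 ≤ t) : (t, (1:ℝ)) ∉ zeroCellBundle :=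
  fun ⟨_, _, h⟩ => by linarith [sqrt_eight_thirds_lt_two]

/-- the zero cell `{(x₁,x₂) ∈ [0,1]² : 2(x₁+x₂) ≤ √(8/3)}` has
`μ`-measure zero: the interior integral of `−3` over the triangle equals `−1`,
cancelling the point mass `+1` at the origin. -/
theorem zero_cell_bundle_integrates_to_zero :
    (∫ x in zeroCellBundle ∩ (Set.Ioo (0:ℝ) 1 ×ˢ Set.Ioo (0:ℝ) 1), (-3 : ℝ)) = -1 ∧
    muUnif zeroCellBundle = 0 := by
  have hinterior : (∫ x in zeroCellBundle ∩ (Ioo (0:ℝ) 1 ×ˢ Ioo (0:ℝ) 1), (-3 : ℝ)) = -1 := by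
    rw [zeroCellBundle_inter_Ioo_prod_Ioo, setIntegral_const, measureReal_def,
      volume_cornerTriangle (by positivity), sqrt_eight_thirds_div_two_sq,
      ENNReal.toReal_ofReal (by norm_num)]
    norm_num
  have hright : {t : ℝ | t ∈ Icc (0:ℝ) 1 ∧ ((1:ℝ), t) ∈ zeroCellBundle} = ∅ :=
    eq_empty_of_forall_notMem fun t ⟨ht, hmem⟩ => one_prod_notMem_zeroCellBundle ht.1 hmem
  have htop : {t : ℝ | t ∈ Icc (0:ℝ) 1 ∧ (t, (1:ℝ)) ∈ zeroCellBundle} = ∅ :=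
    eq_empty_of_forall_notMem fun t ⟨ht, hmem⟩ => prod_one_notMem_zeroCellBundle ht.1 hmem
  refine ⟨hinterior, ?_⟩
  rw [muUnif, hinterior, if_pos zero_mem_zeroCellBundle, hright, htop]
  norm_num
end

section
/- If S ⊆ ℝⁿ is compact and x ≠ y in ℝⁿ, then the supremum ℓ_S(x,y) = sup_{s∈S} s·(x−y) is attained, and every maximizer lies in the exposed set exp(S) = {s ∈ S : ∃ x,y ∈ X, s·(x−y) = ℓ_S(x,y)}; consequently if γ* is supported on pairs (x,y) with u*(x) − u*(y) = ℓ_S(x,y), then γ*-almost every pair shares a common subgradient s ∈ exp(S) of u* at both x and y. -/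
/-! If `s ∈ S` is a subgradient of `u*` at `x`, then
`ℓ_S(x,y) ≥ s·(x-y) ≥ u*(x) - u*(y)`, so on a tight pair `s` attains `ℓ_S(x,y)`,
and then `u*(z) ≥ u*(x) + s·(z-x) = u*(y) + s·(z-y)` makes `s` a subgradient at `y` too. -/

open MeasureTheory

/-- `exp(S)`: the union of exposed faces of `S` with respect to directions in
`X − X`. -/
noncomputable def exposedSet {n : ℕ} (X S : Set (Fin n → ℝ)) : Set (Fin n → ℝ) :=
  {s ∈ S | ∃ x ∈ X, ∃ y ∈ X, (∑ i, s i * (x i - y i)) = ellS S x y}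

variable {n : ℕ}

def IsSubgradientOn (X : Set (Fin n → ℝ)) (u : (Fin n → ℝ) → ℝ) (s x : Fin n → ℝ) : Prop :=
  ∀ z ∈ X, u x + ∑ i, s i * (z i - x i) ≤ u z

theorem sum_mul_sub_add_sum_mul_sub (s x y z : Fin n → ℝ) :
    ∑ i, s i * (z i - x i) + ∑ i, s i * (x i - y i) = ∑ i, s i * (z i - y i) := by
  rw [← Finset.sum_add_distrib]
  congr 1 with i
  ring

theorem continuous_sum_mul_sub (x y : Fin n → ℝ) :
    Continuous fun s : Fin n → ℝ => ∑ i, s i * (x i - y i) := by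
  fun_prop

theorem le_ellS {S : Set (Fin n → ℝ)} (hS : IsCompact S) {s : Fin n → ℝ} (hs : s ∈ S)
    (x y : Fin n → ℝ) : ∑ i, s i * (x i - y i) ≤ ellS S x y := by
  have hbdd : BddAbove {r : ℝ | ∃ s ∈ S, r = ∑ i, s i * (x i - y i)} := by
    obtain ⟨C, hC⟩ := (hS.image (continuous_sum_mul_sub x y)).bddAbove
    exact ⟨C, by rintro r ⟨s', hs', rfl⟩; exact hC ⟨s', hs', rfl⟩⟩
  exact le_csSup hbdd ⟨s, hs, rfl⟩

theorem exists_sum_mul_sub_eq_ellS {S : Set (Fin n → ℝ)} (hS : IsCompact S)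
    (hSne : S.Nonempty) (x y : Fin n → ℝ) :
    ∃ s ∈ S, ∑ i, s i * (x i - y i) = ellS S x y := by
  obtain ⟨s, hs, hmax⟩ :=
    hS.exists_isMaxOn hSne (continuous_sum_mul_sub x y).continuousOn
  refine ⟨s, hs, le_antisymm (le_ellS hS hs x y) (csSup_le ⟨_, s, hs, rfl⟩ ?_)⟩
  rintro r ⟨s', hs', rfl⟩
  exact hmax hs'

theorem IsSubgradientOn.sum_mul_sub_eq_ellS {X S : Set (Fin n → ℝ)} (hS : IsCompact S)
    {u : (Fin n → ℝ) → ℝ} {s x y : Fin n → ℝ} (hs : s ∈ S) (hsx : IsSubgradientOn X u s x)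
    (hy : y ∈ X) (htight : u x - u y = ellS S x y) :
    ∑ i, s i * (x i - y i) = ellS S x y := by
  have hyx := hsx y hy
  have hcancel := sum_mul_sub_add_sum_mul_sub s x y y
  simp only [sub_self, mul_zero, Finset.sum_const_zero] at hcancel
  linarith [le_ellS hS hs x y]

theorem IsSubgradientOn.of_tight {X S : Set (Fin n → ℝ)} (hS : IsCompact S)
    {u : (Fin n → ℝ) → ℝ} {s x y : Fin n → ℝ} (hs : s ∈ S) (hsx : IsSubgradientOn X u s x)
    (hy : y ∈ X) (htight : u x - u y = ellS S x y) :
    IsSubgradientOn X u s y := by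
  intro z hz
  have hattain := hsx.sum_mul_sub_eq_ellS hS hs hy htight
  linarith [hsx z hz, sum_mul_sub_add_sum_mul_sub s x y z]

theorem exposed_allocations_general {n : ℕ} (X S : Set (Fin n → ℝ))
    (hS : IsCompact S) (hSne : S.Nonempty)
    (ustar : (Fin n → ℝ) → ℝ)
    (hsub : ∀ y ∈ X, ∃ s ∈ S, ∀ x ∈ X,
      ustar y + ∑ i, s i * (x i - y i) ≤ ustar x)
    (γ : Measure ((Fin n → ℝ) × (Fin n → ℝ)))
    (hγX : γ (X ×ˢ X)ᶜ = 0)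
    (hγtight : ∀ᵐ p ∂γ, ustar p.1 - ustar p.2 = ellS S p.1 p.2) :
    (∀ x ∈ X, ∀ y ∈ X, x ≠ y →
      (∃ s ∈ S, (∑ i, s i * (x i - y i)) = ellS S x y) ∧
      (∀ s ∈ S, (∑ i, s i * (x i - y i)) = ellS S x y → s ∈ exposedSet X S)) ∧
    (∀ᵐ p ∂γ, ∃ s ∈ exposedSet X S,
      (∀ z ∈ X, ustar p.1 + ∑ i, s i * (z i - p.1 i) ≤ ustar z) ∧
      (∀ z ∈ X, ustar p.2 + ∑ i, s i * (z i - p.2 i) ≤ ustar z)) := by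
  refine ⟨fun x hx y hy _ => ⟨exists_sum_mul_sub_eq_ellS hS hSne x y,
    fun s hs hattain => ⟨hs, x, hx, y, hy, hattain⟩⟩, ?_⟩
  have hXX : ∀ᵐ p ∂γ, p ∈ X ×ˢ X := mem_ae_iff.mpr hγX
  filter_upwards [hXX, hγtight] with p ⟨hp₁, hp₂⟩ htight
  obtain ⟨s, hs, hsp₁⟩ := hsub p.1 hp₁
  have hsp₁ : IsSubgradientOn X ustar s p.1 := hsp₁
  exact ⟨s, ⟨hs, p.1, hp₁, p.2, hp₂, hsp₁.sum_mul_sub_eq_ellS hS hs hp₂ htight⟩,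
    hsp₁, hsp₁.of_tight hS hs hp₂ htight⟩

/-- for compact nonempty `S` and `x ≠ y` in `X`, the supremum
`ℓ_S(x,y)` is attained, every maximizer lies in `exp(S)`, and if `γ*` is
supported on pairs with `u*(x) − u*(y) = ℓ_S(x,y)` then `γ*`-a.e. pair shares a
common subgradient `s ∈ exp(S)` of `u*` at both points. -/
theorem exposed_allocations {n : ℕ} (X S : Set (Fin n → ℝ))
    (hX : IsCompact X) (hXc : Convex ℝ X)
    (hS : IsCompact S) (hSne : S.Nonempty)
    (ustar : (Fin n → ℝ) → ℝ) (hconv : ConvexOn ℝ X ustar)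
    (hsub : ∀ y ∈ X, ∃ s ∈ S, ∀ x ∈ X,
      ustar y + ∑ i, s i * (x i - y i) ≤ ustar x)
    (γ : Measure ((Fin n → ℝ) × (Fin n → ℝ))) [IsFiniteMeasure γ]
    (hγX : γ (X ×ˢ X)ᶜ = 0)
    (hγtight : ∀ᵐ p ∂γ, ustar p.1 - ustar p.2 = ellS S p.1 p.2) :
    (∀ x ∈ X, ∀ y ∈ X, x ≠ y →
      (∃ s ∈ S, (∑ i, s i * (x i - y i)) = ellS S x y) ∧
      (∀ s ∈ S, (∑ i, s i * (x i - y i)) = ellS S x y → s ∈ exposedSet X S)) ∧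
    (∀ᵐ p ∂γ, ∃ s ∈ exposedSet X S,
      (∀ z ∈ X, ustar p.1 + ∑ i, s i * (z i - p.1 i) ≤ ustar z) ∧
      (∀ z ∈ X, ustar p.2 + ∑ i, s i * (z i - p.2 i) ≤ ustar z)) :=
  exposed_allocations_general X S hS hSne ustar hsub γ hγX hγtight
end
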